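/- arXiv:2205.09210 — 3 statements merged into one kernel-verified Lean document; each statement's English description precedes it below -/
import Mathlib

section
/- Let H be a finite loopless digraph that contains no 4-cycle of algebraic girth 0 as a subgraph, let G be a finite weakly connected loopless digraph with at least two vertices, and let φ, ψ : G → H be digraph homomorphisms that differ on exactly one vertex u, with φ(u) = a, ψ(u) = b and a ≠ b. Then all in-neighbors and out-neighbors of u in G receive one common color: there is a vertex h ∈ V(H) such that φ(v) = ψ(v) = h for every vertex v with v → u or u → v in G. (Consequently, every H-recoloring sequence for such H satisfies the monochromatic neighborhood property.) -/
namespace HRecoloring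

/-- A digraph: a vertex type together with an arc relation. -/
structure Dgraph (V : Type) where
  Adj : V → V → Prop

variable {V X : Type}

/-- Adjacency in the underlying undirected graph. -/
def Dgraph.UAdj (G : Dgraph V) (u v : V) : Prop := G.Adj u v ∨ G.Adj v u

/-- A digraph is loopless if it has no arc `v → v`. -/
def Dgraph.Loopless (G : Dgraph V) : Prop := ∀ v, ¬ G.Adj v v

/-- A digraph is reflexive if `v → v` for every vertex `v`. -/
def Dgraph.IsReflexive (G : Dgraph V) : Prop := ∀ v, G.Adj v v

/-- A symmetric digraph, which we identify with an undirected graph. -/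
def Dgraph.IsSymmetric (G : Dgraph V) : Prop := ∀ u v, G.Adj u v → G.Adj v u

/-- The underlying undirected graph, as a symmetric digraph. -/
def Dgraph.usym (G : Dgraph V) : Dgraph V := ⟨fun u v => G.UAdj u v⟩

/-- A (di)graph homomorphism. -/
def IsHom (G : Dgraph V) (H : Dgraph X) (f : V → X) : Prop :=
  ∀ ⦃u v⦄, G.Adj u v → H.Adj (f u) (f v)

/-- A walk from `a` to `b`, encoded by its list of successive vertices.
A walk in a digraph is a walk in its underlying undirected graph. -/
def IsWalk (G : Dgraph V) (a b : V) (l : List V) : Prop :=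
  l ≠ [] ∧ l.head? = some a ∧ l.getLast? = some b ∧ l.Chain' G.UAdj

/-- Weak connectivity. -/
def Dgraph.WConn (G : Dgraph V) : Prop := ∀ u v : V, ∃ l, IsWalk G u v l

/-- Concatenation of two walks sharing an endpoint. -/
def wcomp (l₁ l₂ : List V) : List V := l₁ ++ l₂.tail

/-- Number of edges of a walk. -/
def wlen (l : List V) : ℕ := l.length - 1

/-- One reduction step on walks: delete a backtracking pair `(x y)(y x)` or a
one-edge loop step `(x x)`. -/
def RStep (l l' : List V) : Prop :=
  (∃ (p s : List V) (x y : V), l = p ++ [x, y, x] ++ s ∧ l' = p ++ [x] ++ s) ∨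
  (∃ (p s : List V) (x : V), l = p ++ [x, x] ++ s ∧ l' = p ++ [x] ++ s)

/-- Equality of walks in the fundamental groupoid `π(H)`: the equivalence
generated by reduction steps (two walks are equal in `π(H)` iff they reduce to
the same reduced walk). -/
def PiEq (l l' : List V) : Prop := Relation.EqvGen RStep l l'

/-- A walk is reduced if no reduction step applies to it. -/
def IsReduced (l : List V) : Prop := ∀ l', ¬ RStep l l'

/-- A closed walk is cyclically reduced if it is reduced and its first and last
edges are not inverses of each other. -/
def IsCycReduced (l : List V) : Prop :=
  IsReduced l ∧ ∃ h : 2 ≤ l.length,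
    l.get ⟨1, by omega⟩ ≠ l.get ⟨l.length - 2, by omega⟩

/-- `n`-fold concatenation of a closed walk `R` based at `h`. -/
def witer (R : List V) (h : V) : ℕ → List V
  | 0 => [h]
  | n + 1 => wcomp R (witer R h n)

/-- `Rⁿ` for an integer `n`, for a closed walk `R` based at `h`; for `n < 0`
this is the `|n|`-fold concatenation of the reversed walk `R⁻¹`. -/
def zpowWalk (R : List V) (h : V) (n : ℤ) : List V :=
  if 0 ≤ n then witer R h n.toNat else witer R.reverse h (-n).toNat

/-- A walk is symmetric if every edge it traverses is a symmetric arc. -/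
def IsSymWalk (H : Dgraph X) (l : List X) : Prop :=
  l.Chain' fun a b => H.Adj a b ∧ H.Adj b a

/-- The conjugated walk `α(W)⁻¹ · Q · β(W)`. -/
def conj (α β : V → X) (Wl : List V) (Q : List X) : List X :=
  wcomp (wcomp (Wl.map α).reverse Q) (Wl.map β)

/-- Topological validity of a walk `Q` from `α q` to `β q`:
`β(C) = Q⁻¹ · α(C) · Q` in `π(H)` for every closed walk `C` at `q`. -/
def TopValid (G : Dgraph V) (H : Dgraph X) (α β : V → X) (q : V) (Q : List X) : Prop :=
  ∀ C : List V, IsWalk G q q C →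
    PiEq (C.map β) (wcomp (wcomp Q.reverse (C.map α)) Q)

/-- IN-zigzag pattern `a₁ ← a₂ → a₃ ← … ← a_{n-1} → a_n`. -/
def INCompatible (H : Dgraph X) (l : List X) : Prop :=
  ∀ (i : ℕ) (h : i + 1 < l.length),
    if i % 2 = 0 then H.Adj (l.get ⟨i + 1, h⟩) (l.get ⟨i, by omega⟩)
    else H.Adj (l.get ⟨i, by omega⟩) (l.get ⟨i + 1, h⟩)

/-- OUT-zigzag pattern `a₁ → a₂ ← a₃ → … → a_{n-1} ← a_n`. -/
def OUTCompatible (H : Dgraph X) (l : List X) : Prop :=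
  ∀ (i : ℕ) (h : i + 1 < l.length),
    if i % 2 = 0 then H.Adj (l.get ⟨i, by omega⟩) (l.get ⟨i + 1, h⟩)
    else H.Adj (l.get ⟨i + 1, h⟩) (l.get ⟨i, by omega⟩)

/-- A vertex is of type IN if it has an in-neighbor. -/
def TypeIN (G : Dgraph V) (v : V) : Prop := ∃ u, G.Adj u v

/-- A vertex is of type OUT if it has an out-neighbor. -/
def TypeOUT (G : Dgraph V) (v : V) : Prop := ∃ u, G.Adj v u

/-- A vertex is of type SYM if it is of type IN and of type OUT. -/
def TypeSYM (G : Dgraph V) (v : V) : Prop := TypeIN G v ∧ TypeOUT G v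

/-- The zigzag condition for the vertex `v`. -/
def Zigzag (G : Dgraph V) (H : Dgraph X) (v : V) (l : List X) : Prop :=
  (TypeIN G v → INCompatible H l) ∧ (TypeOUT G v → OUTCompatible H l)

/-- A recoloring sequence: a nonempty sequence of homomorphisms in which
consecutive homomorphisms differ on exactly one vertex. -/
def IsRecolSeq (G : Dgraph V) (H : Dgraph X) (σs : List (V → X)) : Prop :=
  σs ≠ [] ∧ (∀ σ ∈ σs, IsHom G H σ) ∧ σs.Chain' fun σ σ' => ∃! u, σ u ≠ σ' u

/-- The monochromatic neighborhood property: whenever a vertex changes its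
color, all of its neighbors (in the underlying undirected graph) have one
common color. -/
def MonoNbhd (G : Dgraph V) (σs : List (V → X)) : Prop :=
  σs.Chain' fun σ σ' => ∀ v, σ v ≠ σ' v → ∃ h, ∀ w, G.UAdj v w → σ w = h

/-- `VWalk G v σs S`: `S` is the vertex walk `S(v)` of the recoloring sequence
`σs`; each color change of `v` from `a` to `b`, while all neighbors of `v` are
colored `h`, contributes the two edges `(a h)(h b)`. -/
inductive VWalk (G : Dgraph V) (v : V) : List (V → X) → List X → Prop
  | single (σ : V → X) : VWalk G v [σ] [σ v]
  | stay {σ σ' : V → X} {rest : List (V → X)} {l : List X} :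
      σ v = σ' v → VWalk G v (σ' :: rest) l → VWalk G v (σ :: σ' :: rest) l
  | move {σ σ' : V → X} {rest : List (V → X)} {l : List X} (h : X) :
      σ v ≠ σ' v → (∀ w, G.UAdj v w → σ w = h) →
      VWalk G v (σ' :: rest) l → VWalk G v (σ :: σ' :: rest) (σ v :: h :: l)

/-- `H`-realizability of a walk `Q` via recoloring sequences satisfying the
monochromatic neighborhood property: `Q = S(q)` in `π(H)`. -/
def MRealizable (G : Dgraph V) (H : Dgraph X) (α β : V → X) (q : V) (Q : List X) : Prop :=
  ∃ (σs : List (V → X)) (Sq : List X),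
    IsRecolSeq G H σs ∧ σs.head? = some α ∧ σs.getLast? = some β ∧
    MonoNbhd G σs ∧ VWalk G q σs Sq ∧ PiEq Sq Q

/-- Orientation compatibility of a walk `Q`: every generated vertex walk
satisfies the zigzag condition. -/
def OrientCompatible (G : Dgraph V) (H : Dgraph X) (α β : V → X) (q : V) (Q : List X) : Prop :=
  ∀ (v : V) (Wl : List V), IsWalk G q v Wl →
    ∀ S : List X, IsReduced S → PiEq (conj α β Wl Q) S → Zigzag G H v S

/-- Hom₁-adjacency: the homomorphisms differ on exactly one vertex and, for
every arc `x → y` of `G`, both `φ x → ψ y` and `ψ x → φ y` are arcs of `H`. -/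
def Hom1Adj (G : Dgraph V) (H : Dgraph X) (φ ψ : V → X) : Prop :=
  (∃! u, φ u ≠ ψ u) ∧ ∀ ⦃x y⦄, G.Adj x y → H.Adj (φ x) (ψ y) ∧ H.Adj (ψ x) (φ y)

/-- A recoloring sequence in the Hom₁ sense (digraphs). -/
def Hom1Seq (G : Dgraph V) (H : Dgraph X) (σs : List (V → X)) : Prop :=
  σs ≠ [] ∧ (∀ σ ∈ σs, IsHom G H σ) ∧ σs.Chain' (Hom1Adj G H)

/-- A recoloring sequence in which each step recolors exactly one vertex to an
adjacent color (the Hom₁ sense for reflexive undirected graphs). -/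
def AdjRecolSeq (G : Dgraph V) (H : Dgraph X) (σs : List (V → X)) : Prop :=
  σs ≠ [] ∧ (∀ σ ∈ σs, IsHom G H σ) ∧
  σs.Chain' fun σ σ' => (∃! u, σ u ≠ σ' u) ∧ ∀ u, σ u ≠ σ' u → H.Adj (σ u) (σ' u)

/-- The push-or-pull property: whenever a vertex changes its color from `a` to
`b`, every neighbor of that vertex has color `a` or `b`. -/
def PushOrPull (G : Dgraph V) (σs : List (V → X)) : Prop :=
  σs.Chain' fun σ σ' => ∀ u, σ u ≠ σ' u → ∀ w, G.UAdj u w → σ w = σ u ∨ σ w = σ' u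

/-- The walk of successive colors of `v` along a recoloring sequence. -/
def colorWalk (σs : List (V → X)) (v : V) : List X := σs.map fun σ => σ v

/-- `H`-realizability via recoloring sequences (reflexive undirected Hom₁
sense) satisfying the push-or-pull property. -/
def PRealizable (G : Dgraph V) (H : Dgraph X) (α β : V → X) (q : V) (Q : List X) : Prop :=
  ∃ σs : List (V → X), AdjRecolSeq G H σs ∧ σs.head? = some α ∧ σs.getLast? = some β ∧
    PushOrPull G σs ∧ PiEq (colorWalk σs q) Q

/-- `H`-realizability via Hom₁ recoloring sequences of digraphs satisfying the
push-or-pull property. -/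
def DRealizable (G : Dgraph V) (H : Dgraph X) (α β : V → X) (q : V) (Q : List X) : Prop :=
  ∃ σs : List (V → X), Hom1Seq G H σs ∧ σs.head? = some α ∧ σs.getLast? = some β ∧
    PushOrPull G σs ∧ PiEq (colorWalk σs q) Q

/-- `H` contains no 4-cycle of algebraic girth 0 as a subgraph (neither of the
two orientations of the 4-cycle with two forward and two backward arcs). -/
def NoZeroGirthC4 (H : Dgraph X) : Prop :=
  ∀ a b c d : X, a ≠ b → a ≠ c → a ≠ d → b ≠ c → b ≠ d → c ≠ d →
    ¬(H.Adj a b ∧ H.Adj b d ∧ H.Adj a c ∧ H.Adj c d) ∧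
    ¬(H.Adj a b ∧ H.Adj d b ∧ H.Adj a c ∧ H.Adj d c)

/-- `H` contains no triangle of algebraic girth 1 as a subgraph. -/
def NoOneGirthTriangle (H : Dgraph X) : Prop :=
  ∀ x y z : X, x ≠ y → y ≠ z → x ≠ z → ¬(H.Adj x y ∧ H.Adj y z ∧ H.Adj x z)

/-- A path in the reconfiguration graph `R_H(G)` from `α` to `β`. -/
def IsRPath (G : Dgraph V) (H : Dgraph X) (α β : V → X) (L : List (V → X)) : Prop :=
  L ≠ [] ∧ L.head? = some α ∧ L.getLast? = some β ∧
  (∀ σ ∈ L, IsHom G H σ) ∧ L.Chain' fun φ ψ => ∃! u, φ u ≠ ψ u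

/-- A path in the graph `Hom₁(G, H)` from `α` to `β`. -/
def IsHom1Path (G : Dgraph V) (H : Dgraph X) (α β : V → X) (L : List (V → X)) : Prop :=
  L ≠ [] ∧ L.head? = some α ∧ L.getLast? = some β ∧
  (∀ σ ∈ L, IsHom G H σ) ∧ L.Chain' (Hom1Adj G H)

/-- The set of reduced walks `Q` from `α q` to `β q` that generate symmetric
vertex walks on `V'` with the system of walks `Wf`. -/
def SymGenSet (H : Dgraph X) (α β : V → X) (q : V)
    (V' : Set V) (Wf : V → List V) : Set (List X) :=
  {Q | IsWalk H (α q) (β q) Q ∧ IsReduced Q ∧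
    ∀ v ∈ V', ∀ S : List X, IsReduced S → PiEq (conj α β (Wf v) Q) S → IsSymWalk H S}

/-- The set of orientation-compatible walks for `q` and the system `Uf`. -/
def OCSet (G : Dgraph V) (H : Dgraph X) (α β : V → X) (q : V)
    (Uf : V → List V) : Set (List X) :=
  {Q | IsWalk H (α q) (β q) Q ∧ IsReduced Q ∧ Even (wlen Q) ∧
    ∀ (v : V) (S : List X), IsReduced S → PiEq (conj α β (Uf v) Q) S → Zigzag G H v S}

/-- The set `Π_q` of walks from `α q` to `β q` that are `H`-realizable via
recoloring sequences satisfying the monochromatic neighborhood property. -/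
def MRealSet (G : Dgraph V) (H : Dgraph X) (α β : V → X) (q : V) : Set (List X) :=
  {Q | IsWalk H (α q) (β q) Q ∧ IsReduced Q ∧ MRealizable G H α β q Q}

/-- The set of walks from `α q` to `β q` that are `H`-realizable via
recoloring sequences satisfying the push-or-pull property. -/
def PRealSet (G : Dgraph V) (H : Dgraph X) (α β : V → X) (q : V) : Set (List X) :=
  {Q | IsWalk H (α q) (β q) Q ∧ IsReduced Q ∧ PRealizable G H α β q Q}

/-- Ceiling division on natural numbers. -/
def cdiv (a b : ℕ) : ℕ := (a + b - 1) / b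

end HRecoloring

open HRecoloring
/-- If `H` is a loopless digraph with no 4-cycle of algebraic girth 0 and two
homomorphisms from a weakly connected loopless digraph `G` (with at least two
vertices) differ on exactly one vertex `u`, then all in- and out-neighbors of
`u` receive one common color. -/
theorem statement0 {V X : Type} [Fintype V] [Fintype X]
    (G : Dgraph V) (H : Dgraph X)
    (hGll : G.Loopless) (hHll : H.Loopless)
    (hH4 : NoZeroGirthC4 H)
    (hGconn : G.WConn) (hGcard : 1 < Fintype.card V)
    (φ ψ : V → X) (hφ : IsHom G H φ) (hψ : IsHom G H ψ)
    (u : V) (a b : X) (ha : φ u = a) (hb : ψ u = b) (hab : a ≠ b)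
    (hagree : ∀ v, v ≠ u → φ v = ψ v) :
    ∃ h : X, ∀ v : V, G.Adj v u ∨ G.Adj u v → φ v = h ∧ ψ v = h := by
  have ne_of_adj : ∀ {x y : X}, H.Adj x y → x ≠ y := by
    intro x y h e; subst e; exact hHll x h
  have hnu : ∀ v, (G.Adj v u ∨ G.Adj u v) → v ≠ u := by
    rintro v hv rfl; rcases hv with h | h <;> exact hGll v h
  have hψv : ∀ v, (G.Adj v u ∨ G.Adj u v) → ψ v = φ v :=
    fun v hv => (hagree v (hnu v hv)).symm
  -- arcs from/to u in H for a neighbor v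
  have hin : ∀ v, (G.Adj v u ∨ G.Adj u v) → G.Adj v u →
      H.Adj (φ v) a ∧ H.Adj (φ v) b := by
    intro v hv h
    refine ⟨ha ▸ hφ h, ?_⟩
    have := hψ h
    rwa [hψv v hv, hb] at this
  have hout : ∀ v, (G.Adj v u ∨ G.Adj u v) → G.Adj u v →
      H.Adj a (φ v) ∧ H.Adj b (φ v) := by
    intro v hv h
    refine ⟨ha ▸ hφ h, ?_⟩
    have := hψ h
    rwa [hψv v hv, hb] at this
  have key : ∀ v w, (G.Adj v u ∨ G.Adj u v) → (G.Adj w u ∨ G.Adj u w) →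
      φ v = φ w := by
    intro v w hv hw
    by_contra hcd
    rcases hv with h1 | h1 <;> rcases hw with h2 | h2
    · -- v→u, w→u : arcs c→a, c→b, d→a, d→b
      obtain ⟨hca, hcb⟩ := hin v (.inl h1) h1
      obtain ⟨hda, hdb⟩ := hin w (.inl h2) h2
      exact (hH4 (φ v) a b (φ w) (ne_of_adj hca) (ne_of_adj hcb) hcd
        hab (ne_of_adj hda).symm (ne_of_adj hdb).symm).2 ⟨hca, hda, hcb, hdb⟩
    · -- v→u, u→w : arcs c→a, c→b, a→d, b→d
      obtain ⟨hca, hcb⟩ := hin v (.inl h1) h1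
      obtain ⟨had, hbd⟩ := hout w (.inr h2) h2
      exact (hH4 (φ v) a b (φ w) (ne_of_adj hca) (ne_of_adj hcb) hcd
        hab (ne_of_adj had) (ne_of_adj hbd)).1 ⟨hca, had, hcb, hbd⟩
    · -- u→v, w→u : arcs a→c, b→c, d→a, d→b
      obtain ⟨hac, hbc⟩ := hout v (.inr h1) h1
      obtain ⟨hda, hdb⟩ := hin w (.inl h2) h2
      exact (hH4 (φ w) a b (φ v) (ne_of_adj hda) (ne_of_adj hdb)
        (fun e => hcd e.symm) hab (ne_of_adj hac)
        (ne_of_adj hbc)).1 ⟨hda, hac, hdb, hbc⟩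
    · -- u→v, u→w : arcs a→c, b→c, a→d, b→d
      obtain ⟨hac, hbc⟩ := hout v (.inr h1) h1
      obtain ⟨had, hbd⟩ := hout w (.inr h2) h2
      exact (hH4 a (φ v) (φ w) b (ne_of_adj hac) (ne_of_adj had) hab
        hcd (ne_of_adj hbc).symm (ne_of_adj hbd).symm).2 ⟨hac, hbc, had, hbd⟩
  by_cases hex : ∃ v, G.Adj v u ∨ G.Adj u v
  · obtain ⟨v₀, hv₀⟩ := hex
    refine ⟨φ v₀, fun v hv => ?_⟩
    have := key v v₀ hv hv₀
    exact ⟨this, (hψv v hv).trans this⟩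
  · exact ⟨a, fun v hv => absurd ⟨v, hv⟩ hex⟩
end

section
/- Let H be a reflexive digraph that contains no triangle of algebraic girth 1 as a subgraph, let G be a reflexive weakly connected digraph, and let φ, ψ : G → H be homomorphisms that are adjacent in Hom₁(G, H), differing exactly at the vertex u, with φ(u) = a, ψ(u) = b and a ≠ b. Then every neighbor v ≠ u of u in the underlying undirected graph of G satisfies φ(v) = ψ(v) ∈ {a, b}. (Consequently, every H-recoloring sequence in the Hom₁ sense satisfies the push-or-pull property.) -/
open HRecoloring
/-- If `H` is a reflexive digraph with no triangle of algebraic girth 1 and two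
homomorphisms from a reflexive weakly connected digraph `G` are adjacent in
`Hom₁(G, H)`, differing exactly at `u` with colors `a ≠ b`, then every
neighbor `v ≠ u` of `u` satisfies `φ v = ψ v ∈ {a, b}`. -/
theorem statement1 {V X : Type} [Fintype V] [Fintype X]
    (G : Dgraph V) (H : Dgraph X)
    (hGrefl : G.IsReflexive) (hHrefl : H.IsReflexive)
    (hH3 : NoOneGirthTriangle H) (hGconn : G.WConn)
    (φ ψ : V → X) (hφ : IsHom G H φ) (hψ : IsHom G H ψ)
    (hadj : Hom1Adj G H φ ψ)
    (u : V) (a b : X) (ha : φ u = a) (hb : ψ u = b) (hab : a ≠ b)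
    (hagree : ∀ v, v ≠ u → φ v = ψ v) :
    ∀ v : V, v ≠ u → G.UAdj u v → φ v = ψ v ∧ (φ v = a ∨ φ v = b) := by
  intro v hvu hGuv
  have heq : φ v = ψ v := hagree v hvu
  refine ⟨heq, ?_⟩
  by_contra hc
  push_neg at hc
  obtain ⟨hca, hcb⟩ := hc
  set c := φ v with hcdef
  have hab' : H.Adj a b ∧ H.Adj b a := by
    have := hadj.2 (hGrefl u)
    rwa [ha, hb] at this
  cases hGuv with
  | inl h =>
    -- arcs: a → c and b → c
    have h1 : H.Adj a c := by have := hφ h; rwa [ha] at this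
    have h2 : H.Adj b c := by have := hψ h; rwa [hb, ← heq] at this
    exact hH3 a b c hab (fun e => hcb e.symm) (fun e => hca e.symm)
      ⟨hab'.1, h2, h1⟩
  | inr h =>
    -- arcs: c → a and c → b
    have h1 : H.Adj c a := by have := hφ h; rwa [ha] at this
    have h2 : H.Adj c b := by have := hψ h; rwa [hb, ← heq] at this
    exact hH3 c a b hca (fun e => hab e) hcb ⟨h1, hab'.1, h2⟩
end

section
/- Let G and H be undirected graphs, α, β : G → H homomorphisms, and let S = σ₀, …, σ_ℓ be an H-recoloring sequence from α = σ₀ to β = σ_ℓ satisfying the monochromatic neighborhood property. Then for any vertices u, v ∈ V(G) and any walk W from u to v in G, S(v) = α(W)⁻¹ · S(u) · β(W) in π(H). -/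
/-! Along an edge `uv` of `G`, `S(v) = (σ v, σ u) · S(u) · (τ u, τ v)` in `π(H)`, where `σ` and `τ`
are the first and last colorings; this goes by induction on the sequence. Each step recolors one
vertex, so at most one endpoint moves (both only when `u = v` carries a loop). If one endpoint is
recolored from `a` to `b`, the other one has the common neighbor color `h`, and of the two edges
`(a h)(h b)` so contributed, one backtracks against the edge joining the current colors of `u`
and `v`. Conjugating edge by edge along `W` gives the claim; for the trivial walk, `S(v)` is unique
because `v` has a neighbor. -/

theorem Relation.EqvGen.map {α β : Type*} {r : α → α → Prop} {s : β → β → Prop}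
    (f : α → β) (hf : ∀ a b, r a b → s (f a) (f b)) {a b : α} (h : Relation.EqvGen r a b) :
    Relation.EqvGen s (f a) (f b) := by
  induction h with
  | rel a b hab => exact .rel _ _ (hf a b hab)
  | refl a => exact .refl _
  | symm a b _ ih => exact .symm _ _ ih
  | trans a b c _ _ ih₁ ih₂ => exact .trans _ _ _ ih₁ ih₂

namespace HRecoloring

variable {V X : Type}

theorem RStep.append {l l' : List X} (p t : List X) (h : RStep l l') :
    RStep (p ++ l ++ t) (p ++ l' ++ t) := by
  rcases h with ⟨q, s, x, y, rfl, rfl⟩ | ⟨q, s, x, rfl, rfl⟩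
  · exact Or.inl ⟨p ++ q, s ++ t, x, y, by simp, by simp⟩
  · exact Or.inr ⟨p ++ q, s ++ t, x, by simp, by simp⟩

theorem PiEq.refl (l : List X) : PiEq l l := Relation.EqvGen.refl l

theorem PiEq.symm {l l' : List X} (h : PiEq l l') : PiEq l' l := Relation.EqvGen.symm _ _ h

theorem PiEq.trans {l₁ l₂ l₃ : List X} (h : PiEq l₁ l₂) (h' : PiEq l₂ l₃) : PiEq l₁ l₃ :=
  Relation.EqvGen.trans _ _ _ h h'

instance : @Trans (List X) (List X) (List X) PiEq PiEq PiEq := ⟨PiEq.trans⟩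

theorem PiEq.append {l l' : List X} (p t : List X) (h : PiEq l l') :
    PiEq (p ++ l ++ t) (p ++ l' ++ t) :=
  h.map (fun l => p ++ l ++ t) fun _ _ => RStep.append p t

theorem PiEq.cons {l l' : List X} (a : X) (h : PiEq l l') : PiEq (a :: l) (a :: l') := by
  simpa using h.append [a] []

theorem piEq_backtrack (x y : X) (s : List X) : PiEq (x :: y :: x :: s) (x :: s) :=
  Relation.EqvGen.rel _ _ (Or.inl ⟨[], s, x, y, rfl, rfl⟩)

theorem piEq_loop (x : X) (s : List X) : PiEq (x :: x :: s) (x :: s) :=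
  Relation.EqvGen.rel _ _ (Or.inr ⟨[], s, x, rfl, rfl⟩)

theorem conj_cons_cons (α β : V → X) (a : V) (l : List V) (t : List X) :
    conj α β (a :: l) (α a :: t) = (l.map α).reverse ++ (α a :: t) ++ l.map β := by
  simp [conj, wcomp]

theorem Dgraph.WConn.exists_uAdj [Nontrivial V] {G : Dgraph V} (hG : G.WConn) (x : V) :
    ∃ w, G.UAdj x w := by
  obtain ⟨y, hxy⟩ := exists_ne x
  obtain ⟨l, hne, hhead, hlast, hchain⟩ := hG x y
  match l, hhead, hlast, hchain with
  | [_], rfl, hlast, _ => exact absurd (Option.some_injective _ hlast).symm hxy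
  | _ :: b :: _, rfl, _, hchain => exact ⟨b, (List.isChain_cons_cons.mp hchain).1⟩

namespace VWalk

variable {G : Dgraph V} {σs : List (V → X)}

theorem exists_eq_cons {v : V} {S : List X} (hS : VWalk G v σs S) {σ : V → X} (hσ : σs.head? = some σ) :
    ∃ t, S = σ v :: t := by
  induction hS generalizing σ with
  | single => cases hσ; exact ⟨[], rfl⟩
  | stay heq _ ih => cases hσ; rw [heq]; exact ih rfl
  | move => cases hσ; exact ⟨_, rfl⟩

theorem exists_of_monoNbhd (hmono : MonoNbhd G σs) (hne : σs ≠ []) (v : V) :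
    ∃ S, VWalk G v σs S := by
  induction σs with
  | nil => exact absurd rfl hne
  | cons σ rest ih =>
    match rest, hmono with
    | [], _ => exact ⟨[σ v], .single σ⟩
    | σ' :: rest', hmono =>
      obtain ⟨hstep, hmono'⟩ := List.isChain_cons_cons.mp hmono
      obtain ⟨S', hS'⟩ := ih hmono' (List.cons_ne_nil _ _)
      by_cases hv : σ v = σ' v
      · exact ⟨S', .stay hv hS'⟩
      · obtain ⟨h, hh⟩ := hstep v hv
        exact ⟨σ v :: h :: S', .move h hv hh hS'⟩

/-- The color `h` recorded at a move of `v` is forced once `v` has a neighbor. -/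
theorem unique {v w : V} (hvw : G.UAdj v w) {S S' : List X} (hS : VWalk G v σs S)
    (hS' : VWalk G v σs S') : S = S' := by
  induction hS generalizing S' with
  | single => cases hS'; rfl
  | stay heq _ ih =>
    cases hS' with
    | stay _ hrest => exact ih hrest
    | move _ hne _ _ => exact absurd heq hne
  | move h hne hnbr _ ih =>
    cases hS' with
    | stay heq _ => exact absurd heq hne
    | move h' _ hnbr' hrest => rw [← hnbr w hvw, ← hnbr' w hvw, ih hrest]

theorem piEq_cons_append_of_uAdj {u v : V} (huv : G.UAdj u v) {Su Sv : List X}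
    (hSu : VWalk G u σs Su) (hSv : VWalk G v σs Sv)
    (hchain : σs.IsChain fun σ σ' => ∃! w, σ w ≠ σ' w)
    {σ τ : V → X} (hσ : σs.head? = some σ) (hτ : σs.getLast? = some τ) :
    PiEq Sv (σ v :: Su ++ [τ v]) := by
  induction hSu generalizing Sv σ with
  | single σ₀ =>
    cases hσ
    cases hτ
    cases hSv
    exact (piEq_backtrack _ _ _).symm
  | @stay σ₀ σ₁ rest Su' hequ hSu' ih =>
    cases hσ
    obtain ⟨-, hchain'⟩ := List.isChain_cons_cons.mp hchain
    rw [List.getLast?_cons_cons] at hτ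
    cases hSv with
    | stay heqv hSv' => simpa [heqv] using ih hSv' hchain' rfl hτ
    | @move _ _ _ Sv' h _ hnbr hSv' =>
      have hh : σ₁ u = h := hequ ▸ hnbr u huv.symm
      obtain ⟨t, rfl⟩ := hh ▸ hSu'.exists_eq_cons rfl
      calc PiEq (σ₀ v :: h :: Sv') (σ₀ v :: h :: σ₁ v :: h :: (t ++ [τ v])) :=
            PiEq.cons _ (PiEq.cons _ (ih hSv' hchain' rfl hτ))
        PiEq _ (σ₀ v :: h :: (t ++ [τ v])) := PiEq.cons _ (piEq_backtrack _ _ _)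
  | @move σ₀ σ₁ rest Su' h hneu hnbr hSu' ih =>
    cases hσ
    obtain ⟨hunique, hchain'⟩ := List.isChain_cons_cons.mp hchain
    rw [List.getLast?_cons_cons] at hτ
    have hh : σ₀ v = h := hnbr v huv
    cases hSv with
    | stay heqv hSv' =>
      rw [heqv] at hh
      rw [heqv, hh]
      calc PiEq _ (σ₁ v :: Su' ++ [τ v]) := ih hSv' hchain' rfl hτ
        PiEq _ (h :: σ₀ u :: h :: (Su' ++ [τ v])) := by
          rw [hh]; exact (piEq_backtrack _ _ _).symm
    | @move _ _ _ Sv' h' hnev hnbr' hSv' =>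
      obtain rfl : u = v := hunique.unique hneu hnev
      have hh' : σ₀ u = h' := hnbr' u huv
      subst hh hh'
      obtain ⟨t, rfl⟩ := hSu'.exists_eq_cons rfl
      calc PiEq (σ₀ u :: σ₀ u :: Sv') (σ₀ u :: σ₀ u :: σ₁ u :: σ₁ u :: (t ++ [τ u])) :=
            PiEq.cons _ (PiEq.cons _ (ih hSv' hchain' rfl hτ))
        PiEq _ (σ₀ u :: σ₀ u :: σ₁ u :: (t ++ [τ u])) :=
            PiEq.cons _ (PiEq.cons _ (piEq_loop _ _))
        PiEq _ (σ₀ u :: σ₀ u :: σ₀ u :: σ₁ u :: (t ++ [τ u])) := (piEq_loop _ _).symm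

end VWalk

theorem piEq_conj_of_isWalk {G : Dgraph V} {σs : List (V → X)} {α β : V → X}
    (hchain : σs.IsChain fun σ σ' => ∃! w, σ w ≠ σ' w) (hmono : MonoNbhd G σs)
    (hα : σs.head? = some α) (hβ : σs.getLast? = some β)
    {v : V} (hv : ∃ w, G.UAdj v w) {Sv : List X} (hSv : VWalk G v σs Sv)
    (Wl : List V) {u : V} {Su : List X} (hW : IsWalk G u v Wl) (hSu : VWalk G u σs Su) :
    PiEq Sv (conj α β Wl Su) := by
  induction Wl generalizing u Su with
  | nil => exact absurd rfl hW.1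
  | cons a l ih =>
    obtain ⟨-, hhead, hlast, hchainW⟩ := hW
    cases hhead
    obtain ⟨t, rfl⟩ := hSu.exists_eq_cons hα
    match l, hlast, hchainW with
    | [], hlast, _ =>
      cases hlast
      obtain ⟨w, hvw⟩ := hv
      simpa [hSv.unique hvw hSu, conj_cons_cons] using PiEq.refl _
    | b :: l, hlast, hchainW =>
      obtain ⟨hub, hchainW'⟩ := List.isChain_cons_cons.mp hchainW
      obtain ⟨Sb, hSb⟩ := VWalk.exists_of_monoNbhd hmono (by rintro rfl; cases hα) b
      have hedge := VWalk.piEq_cons_append_of_uAdj hub hSu hSb hchain hα hβ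
      obtain ⟨tb, rfl⟩ := hSb.exists_eq_cons hα
      calc PiEq Sv ((l.map α).reverse ++ (α b :: tb) ++ l.map β) := by
            rw [← conj_cons_cons]
            exact ih ⟨List.cons_ne_nil _ _, rfl, hlast, hchainW'⟩ hSb
        PiEq _ ((l.map α).reverse ++ (α b :: α a :: t ++ [β b]) ++ l.map β) :=
            hedge.append _ _
        _ = conj α β (a :: b :: l) (α a :: t) := by
            rw [conj_cons_cons]; simp

end HRecoloring

open HRecoloring
theorem statement5_general {V X : Type} [Fintype V]
    (G : Dgraph V) (H : Dgraph X)
    (hGconn : G.WConn) (hGcard : 1 < Fintype.card V)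
    (α β : V → X) (σs : List (V → X))
    (hseq : IsRecolSeq G H σs)
    (hhead : σs.head? = some α) (hlast : σs.getLast? = some β)
    (hmono : MonoNbhd G σs)
    (u v : V) (Wl : List V) (hW : IsWalk G u v Wl)
    (Su Sv : List X) (hSu : VWalk G u σs Su) (hSv : VWalk G v σs Sv) :
    PiEq Sv (conj α β Wl Su) := by
  have : Nontrivial V := Fintype.one_lt_card_iff_nontrivial.mp hGcard
  exact piEq_conj_of_isWalk hseq.2.2 hmono hhead hlast (hGconn.exists_uAdj v) hSv Wl hW hSu

/-- For undirected graphs `G, H` and an `H`-recoloring sequence `σs` from `α`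
to `β` satisfying the monochromatic neighborhood property, the vertex walks
satisfy `S(v) = α(W)⁻¹ · S(u) · β(W)` in `π(H)` for every walk `W` from `u` to
`v` in `G`. -/
theorem statement5 {V X : Type} [Fintype V] [Fintype X]
    (G : Dgraph V) (H : Dgraph X)
    (hGsym : G.IsSymmetric) (hHsym : H.IsSymmetric)
    (hGconn : G.WConn) (hHconn : H.WConn) (hGcard : 1 < Fintype.card V)
    (α β : V → X) (σs : List (V → X))
    (hseq : IsRecolSeq G H σs)
    (hhead : σs.head? = some α) (hlast : σs.getLast? = some β)
    (hmono : MonoNbhd G σs)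
    (u v : V) (Wl : List V) (hW : IsWalk G u v Wl)
    (Su Sv : List X) (hSu : VWalk G u σs Su) (hSv : VWalk G v σs Sv) :
    PiEq Sv (conj α β Wl Su) :=
  statement5_general G H hGconn hGcard α β σs hseq hhead hlast hmono u v Wl hW Su Sv hSu hSv
end
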